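/- Let A be a finite set and let F be a binary hierarchy on A, i.e. a family of nonempty subsets of A with A ∈ F, any two members of F either disjoint or nested, and every non-minimal member X of F is the disjoint union of exactly two members B_X, C_X ∈ F that are the maximal members of F properly contained in X. For X ∈ F let N_X denote the number of minimal members of F contained in X. Let c : F → ℝ with c(R) > 0 for all R ∈ F, and let T : F × ℕ → ℝ satisfy: T(X, 1) = c(X) for every X ∈ F, and for every non-minimal X ∈ F and every k with 2 ≤ k ≤ N_X, T(X, k) = min { T(B_X, i) · T(C_X, j) : i + j = k, 1 ≤ i ≤ N_{B_X}, 1 ≤ j ≤ N_{C_X} }. Then for every X ∈ F and every k with 1 ≤ k ≤ N_X, T(X, k) equals the minimum of the product cost ∏_{R ∈ P} c(R) over all partitions P of X into exactly k blocks belonging to F. In particular, given the number of regions k of the partition of the image, this recursive computation gives the optimum partition spanned by the hierarchy. -/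
import Mathlib


/-- `P` is a partition of the finite set `X` into nonempty, pairwise disjoint blocks
whose union is `X`. -/
def IsPartitionOf {α : Type*} [DecidableEq α] (P : Finset (Finset α)) (X : Finset α) : Prop :=
  (∀ R ∈ P, R.Nonempty) ∧ (∀ R ∈ P, ∀ S ∈ P, R ≠ S → Disjoint R S) ∧ P.sup id = X

/-- The minimal members (leaves) of the family `ℱ` that are contained in `X`. -/
def leavesIn {α : Type*} [DecidableEq α] (ℱ : Finset (Finset α)) (X : Finset α) :
    Finset (Finset α) :=
  ℱ.filter (fun L => L ⊆ X ∧ ∀ Y ∈ ℱ, ¬ Y ⊂ L)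

section Aux
variable {α : Type*} [DecidableEq α]

lemma mem_leavesIn {ℱ : Finset (Finset α)} {X L : Finset α} :
    L ∈ leavesIn ℱ X ↔ L ∈ ℱ ∧ L ⊆ X ∧ ∀ Y ∈ ℱ, ¬ Y ⊂ L := by
  simp [leavesIn, and_assoc]

lemma leavesIn_mono {ℱ : Finset (Finset α)} {X Y : Finset α} (h : X ⊆ Y) :
    leavesIn ℱ X ⊆ leavesIn ℱ Y := by
  intro L hL
  rw [mem_leavesIn] at *
  exact ⟨hL.1, hL.2.1.trans h, hL.2.2⟩

lemma leavesIn_nonempty (ℱ : Finset (Finset α)) (X : Finset α) (hX : X ∈ ℱ) :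
    (leavesIn ℱ X).Nonempty := by
  revert hX
  induction X using Finset.strongInduction with
  | _ X ih =>
    intro hX
    by_cases h : ∃ Y ∈ ℱ, Y ⊂ X
    · obtain ⟨Y, hY, hYX⟩ := h
      obtain ⟨L, hL⟩ := ih Y hYX hY
      exact ⟨L, leavesIn_mono hYX.subset hL⟩
    · exact ⟨X, mem_leavesIn.mpr ⟨hX, subset_rfl, fun Y hY hYX => h ⟨Y, hY, hYX⟩⟩⟩

lemma block_subset {P : Finset (Finset α)} {X R : Finset α} (hP : IsPartitionOf P X)
    (hR : R ∈ P) : R ⊆ X := by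
  have := Finset.le_sup (f := id) hR
  rw [hP.2.2] at this
  exact this

lemma partition_card_le {ℱ : Finset (Finset α)} (hne : ∀ X ∈ ℱ, X.Nonempty)
    {P : Finset (Finset α)} {X : Finset α} (hP : IsPartitionOf P X)
    (hPF : ∀ R ∈ P, R ∈ ℱ) : P.card ≤ (leavesIn ℱ X).card := by
  classical
  set f : Finset α → Finset α :=
    fun R => if h : (leavesIn ℱ R).Nonempty then h.choose else ∅ with hf
  have hfmem : ∀ R ∈ P, f R ∈ leavesIn ℱ R := by
    intro R hR
    have h : (leavesIn ℱ R).Nonempty := leavesIn_nonempty ℱ R (hPF R hR)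
    simp only [hf, dif_pos h]
    exact h.choose_spec
  apply Finset.card_le_card_of_injOn f
  · intro R hR
    exact leavesIn_mono (block_subset hP hR) (hfmem R hR)
  · intro R hR S hS hfRS
    by_contra hRS
    have hd := hP.2.1 R hR S hS hRS
    have h1 := (mem_leavesIn.mp (hfmem R hR))
    have h2 := (mem_leavesIn.mp (hfmem S hS))
    have : f R ⊆ R ∩ S := Finset.subset_inter h1.2.1 (hfRS ▸ h2.2.1)
    rw [Finset.disjoint_iff_inter_eq_empty.mp hd] at this
    exact (hne _ h1.1).ne_empty (Finset.subset_empty.mp this)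

end Aux

section Aux2
variable {α : Type*} [DecidableEq α]

lemma leavesIn_of_minimal {ℱ : Finset (Finset α)} {X : Finset α} (hX : X ∈ ℱ)
    (hlam : ∀ Y ∈ ℱ, Disjoint X Y ∨ X ⊆ Y ∨ Y ⊆ X)
    (hmin : ¬ ∃ Y ∈ ℱ, Y ⊂ X) (hXne : X.Nonempty) : leavesIn ℱ X = {X} := by
  apply Finset.Subset.antisymm
  · intro L hL
    rw [mem_leavesIn] at hL
    rw [Finset.mem_singleton]
    by_contra hLX
    exact hmin ⟨L, hL.1, ssubset_of_subset_of_ne hL.2.1 hLX⟩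
  · intro L hL
    rw [Finset.mem_singleton] at hL
    subst hL
    exact mem_leavesIn.mpr ⟨hX, subset_rfl, fun Y hY hYX => hmin ⟨Y, hY, hYX⟩⟩

lemma leavesIn_split {ℱ : Finset (Finset α)} {X B C : Finset α}
    (hne : ∀ X ∈ ℱ, X.Nonempty)
    (hB : B ∈ ℱ) (hC : C ∈ ℱ) (hd : Disjoint B C) (hu : B ∪ C = X)
    (hBX : B ⊂ X) (hCX : C ⊂ X)
    (hcov : ∀ Y ∈ ℱ, Y ⊂ X → Y ⊆ B ∨ Y ⊆ C) :
    leavesIn ℱ X = leavesIn ℱ B ∪ leavesIn ℱ C ∧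
    Disjoint (leavesIn ℱ B) (leavesIn ℱ C) := by
  constructor
  · apply Finset.Subset.antisymm
    · intro L hL
      rw [mem_leavesIn] at hL
      have hLX : L ⊂ X := by
        rcases eq_or_ne L X with h | h
        · exact absurd (h ▸ hBX) (hL.2.2 B hB)
        · exact ssubset_of_subset_of_ne hL.2.1 h
      rcases hcov L hL.1 hLX with h | h
      · exact Finset.mem_union_left _ (mem_leavesIn.mpr ⟨hL.1, h, hL.2.2⟩)
      · exact Finset.mem_union_right _ (mem_leavesIn.mpr ⟨hL.1, h, hL.2.2⟩)
    · intro L hL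
      rcases Finset.mem_union.mp hL with h | h
      · exact leavesIn_mono hBX.subset h
      · exact leavesIn_mono hCX.subset h
  · rw [Finset.disjoint_left]
    intro L hLB hLC
    rw [mem_leavesIn] at hLB hLC
    have : L ⊆ B ∩ C := Finset.subset_inter hLB.2.1 hLC.2.1
    rw [Finset.disjoint_iff_inter_eq_empty.mp hd] at this
    exact (hne _ hLB.1).ne_empty (Finset.subset_empty.mp this)

lemma partition_split {P : Finset (Finset α)} {X B C : Finset α}
    (hP : IsPartitionOf P X) (hd : Disjoint B C) (hu : B ∪ C = X)
    (hcov : ∀ R ∈ P, R ⊆ B ∨ R ⊆ C) :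
    IsPartitionOf (P.filter (· ⊆ B)) B ∧ IsPartitionOf (P.filter (fun R => ¬ R ⊆ B)) C := by
  obtain ⟨hPne, hPd, hPsup⟩ := hP
  have hC' : ∀ R ∈ P.filter (fun R => ¬ R ⊆ B), R ⊆ C := by
    intro R hR
    rw [Finset.mem_filter] at hR
    exact (hcov R hR.1).resolve_left hR.2
  constructor
  · refine ⟨fun R hR => hPne R (Finset.mem_filter.mp hR).1,
      fun R hR S hS h => hPd R (Finset.mem_filter.mp hR).1 S (Finset.mem_filter.mp hS).1 h, ?_⟩
    apply le_antisymm
    · exact Finset.sup_le fun R hR => (Finset.mem_filter.mp hR).2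
    · intro a ha
      have : a ∈ P.sup id := hPsup ▸ (hu ▸ Finset.mem_union_left C ha)
      obtain ⟨R, hR, haR⟩ := Finset.mem_sup.mp this
      rcases hcov R hR with h | h
      · exact Finset.mem_sup.mpr ⟨R, Finset.mem_filter.mpr ⟨hR, h⟩, haR⟩
      · exact absurd ha (Finset.disjoint_right.mp hd (h haR))
  · refine ⟨fun R hR => hPne R (Finset.mem_filter.mp hR).1,
      fun R hR S hS h => hPd R (Finset.mem_filter.mp hR).1 S (Finset.mem_filter.mp hS).1 h, ?_⟩
    apply le_antisymm
    · exact Finset.sup_le fun R hR => hC' R hR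
    · intro a ha
      have : a ∈ P.sup id := hPsup ▸ (hu ▸ Finset.mem_union_right B ha)
      obtain ⟨R, hR, haR⟩ := Finset.mem_sup.mp this
      have hRC : ¬ R ⊆ B := by
        intro h
        exact absurd ha (Finset.disjoint_left.mp hd (h haR))
      exact Finset.mem_sup.mpr ⟨R, Finset.mem_filter.mpr ⟨hR, hRC⟩, haR⟩

end Aux2


/-- Optimality theorem for the dynamic programming scheme of the MULTIPARTITION algorithm:
on a binary hierarchy `ℱ` on the finite set `A` (with children `chB X, chC X` for each
non-minimal `X ∈ ℱ`), if `T` satisfies `T X 1 = c X` and the min-product recursion over the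
children, then for every `X ∈ ℱ` and every `1 ≤ k ≤ N_X` (with `N_X` the number of leaves
contained in `X`), `T X k` is the minimum product cost over all partitions of `X` into
exactly `k` blocks belonging to `ℱ`. -/
theorem multipartition_dp_optimality {α : Type*} [DecidableEq α] (A : Finset α)
    (ℱ : Finset (Finset α))
    (hne : ∀ X ∈ ℱ, X.Nonempty) (hA : A ∈ ℱ) (hsubA : ∀ X ∈ ℱ, X ⊆ A)
    (hlam : ∀ X ∈ ℱ, ∀ Y ∈ ℱ, Disjoint X Y ∨ X ⊆ Y ∨ Y ⊆ X)
    (chB chC : Finset α → Finset α)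
    (hch : ∀ X ∈ ℱ, (∃ Y ∈ ℱ, Y ⊂ X) →
      chB X ∈ ℱ ∧ chC X ∈ ℱ ∧ Disjoint (chB X) (chC X) ∧ chB X ∪ chC X = X ∧
      chB X ⊂ X ∧ chC X ⊂ X ∧ ∀ Y ∈ ℱ, Y ⊂ X → Y ⊆ chB X ∨ Y ⊆ chC X)
    (c : Finset α → ℝ) (hc : ∀ R ∈ ℱ, 0 < c R)
    (T : Finset α → ℕ → ℝ)
    (hT1 : ∀ X ∈ ℱ, T X 1 = c X)
    (hTrec : ∀ X ∈ ℱ, (∃ Y ∈ ℱ, Y ⊂ X) → ∀ k, 2 ≤ k → k ≤ (leavesIn ℱ X).card →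
      IsLeast {r | ∃ i j, i + j = k ∧ 1 ≤ i ∧ i ≤ (leavesIn ℱ (chB X)).card ∧
          1 ≤ j ∧ j ≤ (leavesIn ℱ (chC X)).card ∧
          r = T (chB X) i * T (chC X) j} (T X k)) :
    ∀ X ∈ ℱ, ∀ k, 1 ≤ k → k ≤ (leavesIn ℱ X).card →
      IsLeast {r | ∃ P : Finset (Finset α), IsPartitionOf P X ∧ (∀ R ∈ P, R ∈ ℱ) ∧
        P.card = k ∧ ∏ R ∈ P, c R = r} (T X k) := by
  classical
  suffices H : ∀ n : ℕ, ∀ X ∈ ℱ, X.card ≤ n → ∀ k, 1 ≤ k → k ≤ (leavesIn ℱ X).card →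
      IsLeast {r | ∃ P : Finset (Finset α), IsPartitionOf P X ∧ (∀ R ∈ P, R ∈ ℱ) ∧
        P.card = k ∧ ∏ R ∈ P, c R = r} (T X k) by
    intro X hX k hk1 hk2
    exact H X.card X hX le_rfl k hk1 hk2
  intro n
  induction n with
  | zero =>
    intro X hX hcard
    exact absurd (Finset.card_eq_zero.mp (Nat.le_zero.mp hcard)) (hne X hX).ne_empty
  | succ n ih =>
    intro X hX hcard k hk1 hk2
    rcases eq_or_lt_of_le hk1 with hk | hk
    · -- k = 1
      subst hk
      constructor
      · refine ⟨{X}, ⟨?_, ?_, ?_⟩, ?_, ?_, ?_⟩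
        · intro R hR; rw [Finset.mem_singleton] at hR; rw [hR]; exact hne X hX
        · intro R hR S hS hRS
          rw [Finset.mem_singleton] at hR hS
          exact absurd (hR.trans hS.symm) hRS
        · simp
        · intro R hR; rw [Finset.mem_singleton] at hR; rw [hR]; exact hX
        · simp
        · rw [Finset.prod_singleton, hT1 X hX]
      · rintro r ⟨P, hP, hPF, hPk, hprod⟩
        obtain ⟨R, hR⟩ := Finset.card_eq_one.mp hPk
        have hRX : R = X := by
          have h := hP.2.2
          rw [hR] at h
          simpa using h
        rw [hR, Finset.prod_singleton, hRX] at hprod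
        exact le_of_eq (by rw [hT1 X hX, ← hprod])
    · -- k ≥ 2
      have hk2' : 2 ≤ k := hk
      have hXne := hne X hX
      have hmin : ∃ Y ∈ ℱ, Y ⊂ X := by
        by_contra h
        have := leavesIn_of_minimal hX (hlam X hX) h hXne
        rw [this, Finset.card_singleton] at hk2
        omega
      obtain ⟨hB, hC, hd, hu, hBX, hCX, hcov⟩ := hch X hX hmin
      set B := chB X
      set C := chC X
      have hBcard : B.card ≤ n := by
        have := Finset.card_lt_card hBX
        omega
      have hCcard : C.card ≤ n := by
        have := Finset.card_lt_card hCX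
        omega
      obtain ⟨hTmem, hTlb⟩ := hTrec X hX hmin k hk2' hk2
      obtain ⟨hsplit, hdisjL⟩ := leavesIn_split hne hB hC hd hu hBX hCX hcov
      constructor
      · -- membership: construct an optimal partition
        obtain ⟨i, j, hij, hi1, hiB, hj1, hjC, hval⟩ := hTmem
        obtain ⟨⟨Pb, hPb, hPbF, hPbk, hPbprod⟩, _⟩ := ih B hB hBcard i hi1 hiB
        obtain ⟨⟨Pc, hPc, hPcF, hPck, hPcprod⟩, _⟩ := ih C hC hCcard j hj1 hjC
        have hPbc : Disjoint Pb Pc := by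
          rw [Finset.disjoint_left]
          intro R hRb hRc
          have h1 : R ⊆ B := block_subset hPb hRb
          have h2 : R ⊆ C := block_subset hPc hRc
          have : R ⊆ B ∩ C := Finset.subset_inter h1 h2
          rw [Finset.disjoint_iff_inter_eq_empty.mp hd] at this
          exact (hPb.1 R hRb).ne_empty (Finset.subset_empty.mp this)
        refine ⟨Pb ∪ Pc, ⟨?_, ?_, ?_⟩, ?_, ?_, ?_⟩
        · intro R hR
          rcases Finset.mem_union.mp hR with h | h
          exacts [hPb.1 R h, hPc.1 R h]
        · intro R hR S hS hRS
          rcases Finset.mem_union.mp hR with h1 | h1 <;>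
            rcases Finset.mem_union.mp hS with h2 | h2
          · exact hPb.2.1 R h1 S h2 hRS
          · exact Finset.disjoint_of_subset_left (block_subset hPb h1)
              (Finset.disjoint_of_subset_right (block_subset hPc h2) hd)
          · exact Finset.disjoint_of_subset_left (block_subset hPc h1)
              (Finset.disjoint_of_subset_right (block_subset hPb h2) hd.symm)
          · exact hPc.2.1 R h1 S h2 hRS
        · rw [Finset.sup_union, hPb.2.2, hPc.2.2]
          exact hu ▸ rfl
        · intro R hR
          rcases Finset.mem_union.mp hR with h | h
          exacts [hPbF R h, hPcF R h]
        · rw [Finset.card_union_of_disjoint hPbc, hPbk, hPck, hij]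
        · rw [Finset.prod_union hPbc, hPbprod, hPcprod, hval]
      · -- lower bound
        rintro r ⟨P, hP, hPF, hPk, hprod⟩
        have hRssX : ∀ R ∈ P, R ⊂ X := by
          intro R hR
          have hsub := block_subset hP hR
          rcases eq_or_ne R X with h | h
          · exfalso
            subst h
            obtain ⟨S, hS, hSR⟩ := Finset.exists_mem_ne (by omega : 1 < P.card) R
            have hSsub := block_subset hP hS
            have hdis := hP.2.1 S hS R hR hSR
            have : S ⊆ ∅ := by
              intro a haS
              exact absurd (hSsub haS) (Finset.disjoint_left.mp hdis haS)
            exact (hP.1 S hS).ne_empty (Finset.subset_empty.mp this)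
          · exact ssubset_of_subset_of_ne hsub h
        have hRcov : ∀ R ∈ P, R ⊆ B ∨ R ⊆ C := fun R hR =>
          hcov R (hPF R hR) (hRssX R hR)
        obtain ⟨hPb, hPc⟩ := partition_split hP hd hu hRcov
        set Pb := P.filter (· ⊆ B)
        set Pc := P.filter (fun R => ¬ R ⊆ B)
        have hPbF : ∀ R ∈ Pb, R ∈ ℱ := fun R hR => hPF R (Finset.mem_filter.mp hR).1
        have hPcF : ∀ R ∈ Pc, R ∈ ℱ := fun R hR => hPF R (Finset.mem_filter.mp hR).1
        have hPbC : Pb.card ≤ (leavesIn ℱ B).card := partition_card_le hne hPb hPbF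
        have hPcC : Pc.card ≤ (leavesIn ℱ C).card := partition_card_le hne hPc hPcF
        have hPb1 : 1 ≤ Pb.card := by
          rcases Finset.eq_empty_or_nonempty Pb with h | h
          · exfalso
            rw [h] at hPb
            have := hPb.2.2
            simp at this
            exact (hne B hB).ne_empty this.symm
          · exact Finset.card_pos.mpr h
        have hPc1 : 1 ≤ Pc.card := by
          rcases Finset.eq_empty_or_nonempty Pc with h | h
          · exfalso
            rw [h] at hPc
            have := hPc.2.2
            simp at this
            exact (hne C hC).ne_empty this.symm
          · exact Finset.card_pos.mpr h
        have hsum : Pb.card + Pc.card = k := by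
          rw [← hPk]
          exact Finset.card_filter_add_card_filter_not _
        obtain ⟨⟨Qb, hQb, hQbF, hQbk, hQbprod⟩, hlbB⟩ := ih B hB hBcard Pb.card hPb1 hPbC
        obtain ⟨⟨Qc, hQc, hQcF, hQck, hQcprod⟩, hlbC⟩ := ih C hC hCcard Pc.card hPc1 hPcC
        have hTB_pos : 0 < T B Pb.card := by
          rw [← hQbprod]
          exact Finset.prod_pos fun R hR => hc R (hQbF R hR)
        have hTC_pos : 0 < T C Pc.card := by
          rw [← hQcprod]
          exact Finset.prod_pos fun R hR => hc R (hQcF R hR)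
        have h1 : T B Pb.card ≤ ∏ R ∈ Pb, c R :=
          hlbB ⟨Pb, hPb, hPbF, rfl, rfl⟩
        have h2 : T C Pc.card ≤ ∏ R ∈ Pc, c R :=
          hlbC ⟨Pc, hPc, hPcF, rfl, rfl⟩
        have hXk : T X k ≤ T B Pb.card * T C Pc.card :=
          hTlb ⟨Pb.card, Pc.card, hsum, hPb1, hPbC, hPc1, hPcC, rfl⟩
        calc T X k ≤ T B Pb.card * T C Pc.card := hXk
          _ ≤ (∏ R ∈ Pb, c R) * (∏ R ∈ Pc, c R) :=
              mul_le_mul h1 h2 hTC_pos.le ((hTB_pos.trans_le h1).le)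
          _ = r := by rw [Finset.prod_filter_mul_prod_filter_not, hprod]
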